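/- arXiv:2604.13850 — 2 statements merged into one kernel-verified Lean document; each statement's English description precedes it below -/
import Mathlib

section
/- Let m ≥ 4 and m ≤ n ≤ 5m/4 − 1. Then R(F_n, F_m) ≥ 4n + ⌈m/2⌉, where F_k = K_1 + kK_2 is the fan (a hub joined to k independent edges). -/
open SimpleGraph

/-- `H` is contained in `G` as a subgraph. -/
def Contains {α β : Type*} (G : SimpleGraph α) (H : SimpleGraph β) : Prop :=
  ∃ f : H →g G, Function.Injective f

/-- Every red/blue coloring of `K_N` (red = `C`, blue = `Cᶜ`) has a red `G` or blue `H`. -/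
def RamseyProp {α β : Type*} (N : ℕ) (G : SimpleGraph α) (H : SimpleGraph β) : Prop :=
  ∀ C : SimpleGraph (Fin N), Contains C G ∨ Contains Cᶜ H

/-- The Ramsey number `R(G, H)`. -/
noncomputable def ramseyNumber {α β : Type*} (G : SimpleGraph α) (H : SimpleGraph β) : ℕ :=
  sInf {N | RamseyProp N G H}

/-- The join `G + H`: disjoint union plus all edges in between. -/
def graphJoin {α β : Type*} (G : SimpleGraph α) (H : SimpleGraph β) : SimpleGraph (α ⊕ β) :=
  SimpleGraph.fromRel (fun x y =>
    match x, y with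
    | Sum.inl a, Sum.inl b => G.Adj a b
    | Sum.inr a, Sum.inr b => H.Adj a b
    | _, _ => True)

/-- The wheel `W_n = K_1 + C_{n-1}` on `n` vertices. -/
def wheel (n : ℕ) : SimpleGraph (Fin 1 ⊕ Fin (n - 1)) :=
  graphJoin ⊥ (SimpleGraph.cycleGraph (n - 1))

/-- A perfect matching `k • K_2` on `2k` vertices. -/
def matching (k : ℕ) : SimpleGraph (Fin k × Fin 2) :=
  SimpleGraph.fromRel (fun x y => x.1 = y.1)

/-- The fan `F_k = K_1 + k • K_2`. -/
def fan (k : ℕ) : SimpleGraph (Fin 1 ⊕ Fin k × Fin 2) :=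
  graphJoin ⊥ (matching k)

/-- The kipas `K̂_n = K_1 + P_{n-1}` on `n` vertices. -/
def kipas (n : ℕ) : SimpleGraph (Fin 1 ⊕ Fin (n - 1)) :=
  graphJoin ⊥ (SimpleGraph.pathGraph (n - 1))

/-- The blow-up `G[K_2]`: each vertex replaced by an adjacent pair; vertices in
different pairs adjacent iff the original vertices are adjacent. -/
def blowUp {α : Type*} (G : SimpleGraph α) : SimpleGraph (α × Fin 2) :=
  SimpleGraph.fromRel (fun x y => x.1 = y.1 ∨ G.Adj x.1 y.1)

/-!
The bound comes from an explicit colouring of `K_{4n+⌈m/2⌉-1}`: blow up a 5-vertex pattern into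
red cliques `K_{2n}, H₁, H₂, H₃, H₄`, colouring all edges between two parts alike. Every red
degree is at most `2n - 1`, so there is no red `F_n`. The hub of a blue `F_m` sees `m` disjoint
blue edges, but around every vertex the blue edges are met by fewer than `m` vertices.
Since `ramseyNumber` is an `sInf`, the bound also needs `R(F_n, F_m)` to be finite, which follows
from the clique bound `R(K_s, K_t) ≤ C(s + t, s)`.
-/

open Finset

variable {α β V W : Type*}

lemma Contains.of_injective_hom {G : SimpleGraph α} {C : SimpleGraph V} {D : SimpleGraph W}
    (h : Contains C G) (g : C →g D) (hg : Function.Injective g) : Contains D G := by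
  obtain ⟨f, hf⟩ := h
  exact ⟨g.comp f, hg.comp hf⟩

lemma RamseyProp.contains_of_embedding {N : ℕ} {G : SimpleGraph α} {H : SimpleGraph β}
    (h : RamseyProp N G H) (C : SimpleGraph V) (e : Fin N ↪ V) :
    Contains C G ∨ Contains Cᶜ H := by
  rcases h (C.comap e) with hG | hH
  · exact .inl (hG.of_injective_hom ⟨e, id⟩ e.injective)
  · exact .inr
      (hH.of_injective_hom ⟨e, fun hab => ⟨e.injective.ne hab.1, hab.2⟩⟩ e.injective)

lemma card_lt_ramseyNumber [Fintype V] {G : SimpleGraph α} {H : SimpleGraph β}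
    (hR : ∃ N, RamseyProp N G H) (C : SimpleGraph V) (hG : ¬Contains C G)
    (hH : ¬Contains Cᶜ H) : Fintype.card V < ramseyNumber G H := by
  by_contra! hle
  have hRamsey : RamseyProp (ramseyNumber G H) G H := Nat.sInf_mem hR
  exact (hRamsey.contains_of_embedding C
    ((Fin.castLEEmb hle).trans (Fintype.equivFin V).symm.toEmbedding)).elim hG hH

theorem SimpleGraph.exists_isNClique_or_isNClique_compl [DecidableEq V] (G : SimpleGraph V)
    [DecidableRel G.Adj] (s t : ℕ) (A : Finset V) (hA : (s + t).choose s ≤ #A) :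
    (∃ S ⊆ A, G.IsNClique s S) ∨ ∃ S ⊆ A, Gᶜ.IsNClique t S := by
  induction s generalizing t A with
  | zero => exact .inl ⟨∅, empty_subset _, by simp⟩
  | succ s ihs =>
    induction t generalizing A with
    | zero => exact .inr ⟨∅, empty_subset _, by simp⟩
    | succ t iht =>
      obtain ⟨v, hv⟩ : A.Nonempty :=
        card_pos.mp (lt_of_lt_of_le (Nat.choose_pos (by omega)) hA)
      set R := (A.erase v).filter (G.Adj v)
      set B := (A.erase v).filter (fun w => ¬G.Adj v w)
      have hRA : R ⊆ A := (filter_subset _ _).trans (erase_subset _ _)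
      have hBA : B ⊆ A := (filter_subset _ _).trans (erase_subset _ _)
      have hRB : #R + #B + 1 = #A := by
        rw [card_filter_add_card_filter_not, card_erase_add_one hv]
      have hpascal : (s + 1 + (t + 1)).choose (s + 1)
          = (s + (t + 1)).choose s + (s + 1 + t).choose (s + 1) := by
        rw [show s + 1 + (t + 1) = s + 1 + t + 1 by omega, Nat.choose_succ_succ',
          show s + 1 + t = s + (t + 1) by omega]
      by_cases hR : (s + (t + 1)).choose s ≤ #R
      · rcases ihs (t + 1) R hR with ⟨S, hSR, hS⟩ | ⟨S, hSR, hS⟩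
        · exact .inl ⟨insert v S, insert_subset hv (hSR.trans hRA),
            hS.insert fun w hw => (mem_filter.mp (hSR hw)).2⟩
        · exact .inr ⟨S, hSR.trans hRA, hS⟩
      · rcases iht B (by omega) with ⟨S, hSB, hS⟩ | ⟨S, hSB, hS⟩
        · exact .inl ⟨S, hSB.trans hBA, hS⟩
        · refine .inr ⟨insert v S, insert_subset hv (hSB.trans hBA), hS.insert fun w hw => ?_⟩
          obtain ⟨hwv, hvw⟩ := mem_filter.mp (hSB hw)
          exact (compl_adj G v w).mpr ⟨(ne_of_mem_erase hwv).symm, hvw⟩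

lemma SimpleGraph.IsNClique.contains [Fintype α] {C : SimpleGraph V} {S : Finset V}
    (G : SimpleGraph α) (hS : C.IsNClique (Fintype.card α) S) : Contains C G := by
  let e : α ≃ S := Fintype.equivOfCardEq (by simp [hS.card_eq])
  have he : Function.Injective fun a => (e a : V) := fun a b h => e.injective (Subtype.ext h)
  exact ⟨⟨fun a => e a, fun hab => hS.isClique (e _).2 (e _).2 (he.ne hab.ne)⟩, he⟩

theorem ramseyProp_choose [Fintype α] [Fintype β] (G : SimpleGraph α) (H : SimpleGraph β) :
    RamseyProp ((Fintype.card α + Fintype.card β).choose (Fintype.card α)) G H := by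
  classical
  intro C
  rcases C.exists_isNClique_or_isNClique_compl (Fintype.card α) (Fintype.card β) univ
    (by simp) with ⟨S, -, hS⟩ | ⟨S, -, hS⟩
  exacts [.inl (hS.contains G), .inr (hS.contains H)]

lemma fan_adj_hub (k : ℕ) (x : Fin k × Fin 2) : (fan k).Adj (.inl 0) (.inr x) := by
  simp [fan, graphJoin]

lemma fan_adj_pair (k : ℕ) (i : Fin k) : (fan k).Adj (.inr (i, 0)) (.inr (i, 1)) := by
  simp [fan, graphJoin, matching]

lemma Contains.exists_two_mul_le_degree_of_fan [Fintype V] {G : SimpleGraph V}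
    [DecidableRel G.Adj] {k : ℕ} (h : Contains G (fan k)) : ∃ v, 2 * k ≤ G.degree v := by
  obtain ⟨f, hf⟩ := h
  refine ⟨f (.inl 0), ?_⟩
  have := card_le_card_of_injOn (s := univ) (t := G.neighborFinset (f (.inl 0)))
    (fun x => f (.inr x)) (fun x _ => by simpa using f.map_adj (fan_adj_hub k x))
    (fun x _ y _ hxy => Sum.inr_injective (hf hxy))
  simpa [mul_comm] using this

/-- `T` meets every edge of `G` inside the neighbourhood of `v`. -/
def NbhdEdgeCover (G : SimpleGraph V) (v : V) (T : Finset V) : Prop :=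
  ∀ a b, G.Adj v a → G.Adj v b → G.Adj a b → a ∈ T ∨ b ∈ T

lemma Contains.exists_le_card_of_nbhdEdgeCover_of_fan {G : SimpleGraph V} {k : ℕ}
    (h : Contains G (fan k)) : ∃ v, ∀ T, NbhdEdgeCover G v T → k ≤ #T := by
  obtain ⟨f, hf⟩ := h
  refine ⟨f (.inl 0), fun T hT => ?_⟩
  have hend : ∀ i : Fin k, ∃ c, f (.inr (i, c)) ∈ T := fun i =>
    (hT _ _ (f.map_adj (fan_adj_hub k _)) (f.map_adj (fan_adj_hub k _))
      (f.map_adj (fan_adj_pair k i))).elim (⟨0, ·⟩) (⟨1, ·⟩)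
  choose c hc using hend
  simpa using card_le_card_of_injOn (s := univ) (t := T) (fun i => f (.inr (i, c i)))
    (fun i _ => hc i) (fun i _ j _ hij => (Prod.ext_iff.mp (Sum.inr_injective (hf hij))).1)

section CliqueBlowup

variable {ι : Type*}

def cliqueBlowup (P : SimpleGraph ι) (s : ι → ℕ) : SimpleGraph (Σ i, Fin (s i)) :=
  SimpleGraph.fromRel fun x y => x.1 = y.1 ∨ P.Adj x.1 y.1

variable {P : SimpleGraph ι} {s : ι → ℕ}

lemma cliqueBlowup_adj {x y : Σ i, Fin (s i)} :
    (cliqueBlowup P s).Adj x y ↔ x ≠ y ∧ (x.1 = y.1 ∨ P.Adj x.1 y.1) := by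
  rw [cliqueBlowup, fromRel_adj, eq_comm (a := y.1), P.adj_comm y.1, or_self]

lemma compl_cliqueBlowup_adj {x y : Σ i, Fin (s i)} :
    (cliqueBlowup P s)ᶜ.Adj x y ↔ Pᶜ.Adj x.1 y.1 := by
  rw [compl_adj, compl_adj, cliqueBlowup_adj]
  by_cases h : x.1 = y.1
  · simp [h]
  · have hne : x ≠ y := fun hxy => h (congrArg Sigma.fst hxy)
    simp [h, hne]

instance [DecidableEq ι] [DecidableRel P.Adj] : DecidableRel (cliqueBlowup P s).Adj :=
  fun _ _ => decidable_of_iff _ cliqueBlowup_adj.symm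

lemma degree_cliqueBlowup_lt [Fintype ι] [DecidableEq ι] [DecidableRel P.Adj]
    (x : Σ i, Fin (s i)) :
    (cliqueBlowup P s).degree x < ∑ j ∈ {j | j = x.1 ∨ P.Adj x.1 j}, s j := by
  rw [← card_neighborFinset_eq_degree]
  calc _ < #(({j | j = x.1 ∨ P.Adj x.1 j} : Finset ι).sigma
        fun j => (univ : Finset (Fin (s j)))) := ?_
    _ = _ := by simp [card_sigma]
  refine card_lt_card ((ssubset_iff_of_subset fun y hy => ?_).mpr ⟨x, by simp, by simp⟩)
  simp only [mem_neighborFinset, cliqueBlowup_adj] at hy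
  simp [hy.2.imp_left Eq.symm]

lemma not_contains_cliqueBlowup_fan [Fintype ι] [DecidableEq ι] [DecidableRel P.Adj] {k : ℕ}
    (h : ∀ i, ∑ j ∈ {j | j = i ∨ P.Adj i j}, s j ≤ 2 * k) :
    ¬Contains (cliqueBlowup P s) (fan k) := fun hfan => by
  obtain ⟨v, hv⟩ := hfan.exists_two_mul_le_degree_of_fan
  exact (degree_cliqueBlowup_lt v).not_ge (hv.trans' (h v.1))

lemma NbhdEdgeCover.compl_cliqueBlowup {i : ι} {S : Finset ι} (hS : NbhdEdgeCover Pᶜ i S)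
    (x : Σ i, Fin (s i)) (hx : x.1 = i) :
    NbhdEdgeCover (cliqueBlowup P s)ᶜ x (S.sigma fun _ => univ) := by
  intro a b hxa hxb hab
  simp only [compl_cliqueBlowup_adj, hx] at hxa hxb hab
  simpa using hS _ _ hxa hxb hab

lemma not_contains_compl_cliqueBlowup_fan [Fintype ι] {k : ℕ}
    (h : ∀ i, ∃ S : Finset ι, NbhdEdgeCover Pᶜ i S ∧ ∑ j ∈ S, s j < k) :
    ¬Contains (cliqueBlowup P s)ᶜ (fan k) := fun hfan => by
  obtain ⟨v, hv⟩ := hfan.exists_le_card_of_nbhdEdgeCover_of_fan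
  obtain ⟨S, hS, hsum⟩ := h v.1
  have hcard := hv _ (hS.compl_cliqueBlowup v rfl)
  simp only [card_sigma, card_univ, Fintype.card_fin] at hcard
  exact hsum.not_ge hcard

end CliqueBlowup

/-- Parts `0, …, 4` stand for `K_{2n}, H₁, H₂, H₃, H₄`, of sizes `fanPartSizes m n`. -/
def fanPattern : SimpleGraph (Fin 5) :=
  SimpleGraph.fromRel fun i j => (i = 1 ∨ i = 4) ∧ (j = 2 ∨ j = 3)

instance : DecidableRel fanPattern.Adj := fun _ _ => decidable_of_iff _ (fromRel_adj _ _ _).symm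

def fanPartSizes (m n : ℕ) : Fin 5 → ℕ :=
  ![2 * n, m - 1, 2 * n + (m + 1) / 2 + 1 - 2 * m, m - (m + 1) / 2, (m + 1) / 2 - 1]

lemma card_sigma_fanPartSizes (m n : ℕ) (hm : 1 ≤ m) (h1 : m ≤ n) :
    Fintype.card (Σ i, Fin (fanPartSizes m n i)) = 4 * n + (m + 1) / 2 - 1 := by
  simp only [Fintype.card_sigma, Fintype.card_fin, Fin.sum_univ_five]
  simp only [fanPartSizes, Fin.isValue, Matrix.cons_val_zero, Matrix.cons_val_one, Matrix.cons_val]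
  omega

lemma not_contains_cliqueBlowup_fanPattern_fan (m n : ℕ) (hm : 1 ≤ m) (h1 : m ≤ n) :
    ¬Contains (cliqueBlowup fanPattern (fanPartSizes m n)) (fan n) := by
  have hnbhd : ∀ i, ({j | j = i ∨ fanPattern.Adj i j} : Finset (Fin 5))
      = ![{0}, {1, 2, 3}, {1, 2, 4}, {1, 3, 4}, {2, 3, 4}] i := by
    decide
  refine not_contains_cliqueBlowup_fan fun i => ?_
  rw [hnbhd]
  fin_cases i <;>
    simp only [fanPartSizes, Fin.isValue, Fin.reduceFinMk, Fin.zero_eta, Fin.mk_one,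
      Matrix.cons_val, Matrix.cons_val_zero, Matrix.cons_val_one, mem_insert, mem_singleton,
      Fin.reduceEq, or_self, not_false_eq_true, sum_insert, sum_singleton] <;>
    omega

lemma not_contains_compl_cliqueBlowup_fanPattern_fan (m n : ℕ) (h2 : 4 * n + 4 ≤ 5 * m) :
    ¬Contains (cliqueBlowup fanPattern (fanPartSizes m n))ᶜ (fan m) := by
  -- Between parts, blue is the fan with hub `0` and edges `1–4`, `2–3`.
  have hcover : ∀ i, NbhdEdgeCover fanPatternᶜ i (![{3, 4}, {4}, {3}, {2}, {1}] i) := by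
    unfold NbhdEdgeCover
    decide
  refine not_contains_compl_cliqueBlowup_fan fun i => ⟨_, hcover i, ?_⟩
  fin_cases i <;>
    simp only [fanPartSizes, Fin.isValue, Fin.reduceFinMk, Fin.zero_eta, Fin.mk_one,
      Matrix.cons_val, Matrix.cons_val_zero, Matrix.cons_val_one, mem_singleton,
      Fin.reduceEq, not_false_eq_true, sum_insert, sum_singleton] <;>
    omega

theorem stmt_14_general (m n : ℕ) (h1 : m ≤ n) (h2 : 4 * n + 4 ≤ 5 * m) :
    4 * n + (m + 1) / 2 ≤ ramseyNumber (fan n) (fan m) := by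
  have hm : 1 ≤ m := by omega
  have hlt := card_lt_ramseyNumber ⟨_, ramseyProp_choose (fan n) (fan m)⟩ _
    (not_contains_cliqueBlowup_fanPattern_fan m n hm h1)
    (not_contains_compl_cliqueBlowup_fanPattern_fan m n h2)
  rw [card_sigma_fanPartSizes m n hm h1] at hlt
  omega

theorem stmt_14 (m n : ℕ) (hm : 4 ≤ m) (h1 : m ≤ n) (h2 : 4 * n + 4 ≤ 5 * m) :
    4 * n + (m + 1) / 2 ≤ ramseyNumber (fan n) (fan m) :=
  stmt_14_general m n h1 h2
end

section
/- Let m ≥ 4 and 5m/4 − 1 < n ≤ 3m/2 − 2. Then R(F_n, F_m) ≥ 2n + 3m − 2, where F_k = K_1 + kK_2 is the fan. -/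
open SimpleGraph

/-!
Colour `K_{2n+3m-3}` by blowing up a pattern on five parts `K_{2n}, H₁, H₂, H₃, H₄`, of sizes
`2n, m-1, m-1, ⌊m/2⌋, m-1-⌊m/2⌋`: each part is red, and two parts are joined in blue exactly when
they are adjacent in `bluePattern`. As `5m < 4n+4`, every closed red neighbourhood has at most `2n`
vertices, while the hub of a red `F_n` would need `2n` red neighbours. In the blue neighbourhood of
any vertex, all blue edges meet a union of parts of total size `m-1` (`H₃ ∪ H₄` for a vertex of
`K_{2n}`, otherwise the `Hⱼ` joined in blue to its own part), so the `m` disjoint rim edges of a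
blue `F_m` cannot fit there. Since the set defining `ramseyNumber` is nonempty by the clique Ramsey theorem,
its infimum is not the junk value `0`.
-/

open Finset

lemma contains_iff_isContained {α β : Type*} {G : SimpleGraph α} {H : SimpleGraph β} :
    Contains G H ↔ H ⊑ G :=
  ⟨fun ⟨f, hf⟩ => ⟨f.toCopy hf⟩, fun ⟨f⟩ => ⟨f.toHom, f.injective⟩⟩

namespace SimpleGraph

variable {V : Type*} {G : SimpleGraph V}

theorem exists_forall_not_cliqueFreeOn_or_not_cliqueFreeOn_compl (s t : ℕ) :
    ∃ N, ∀ {V : Type*} (G : SimpleGraph V) (A : Finset V),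
      N ≤ #A → ¬G.CliqueFreeOn A s ∨ ¬Gᶜ.CliqueFreeOn A t := by
  induction s generalizing t with
  | zero => exact ⟨0, fun G A _ => .inl fun h => h (empty_subset _) (by simp)⟩
  | succ s ihs =>
    induction t with
    | zero => exact ⟨0, fun G A _ => .inr fun h => h (empty_subset _) (by simp)⟩
    | succ t iht =>
      obtain ⟨Nₛ, hNₛ⟩ := ihs (t + 1)
      obtain ⟨Nₜ, hNₜ⟩ := iht
      refine ⟨Nₛ + Nₜ + 1, fun G A hA => ?_⟩
      classical
      obtain ⟨a, ha⟩ : A.Nonempty := card_pos.mp (by omega)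
      have hsplit : #A ≤ #(A.filter (G.Adj a)) + #(A.filter (Gᶜ.Adj a)) + 1 := by
        rw [← card_filter_add_card_filter_not (G.Adj a)]
        have : A.filter (¬G.Adj a ·) ⊆ insert a (A.filter (Gᶜ.Adj a)) := by
          intro b hb
          rw [mem_filter] at hb
          by_cases hab : a = b
          · simp [hab]
          · simp [hb.1, hb.2, hab]
        grw [card_le_card this, card_insert_le]
        omega
      by_cases hs : Nₛ ≤ #(A.filter (G.Adj a))
      · exact (hNₛ G _ hs).imp
          (fun h hG => h (by simpa [Set.inter_def] using CliqueFreeOn.of_succ _ hG ha))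
          (fun h hG => h (CliqueFreeOn.subset _ (coe_subset.mpr (filter_subset _ _)) hG))
      · exact (hNₜ G (A.filter (Gᶜ.Adj a)) (by omega)).imp
          (fun h hG => h (CliqueFreeOn.subset _ (coe_subset.mpr (filter_subset _ _)) hG))
          (fun h hG => h (by simpa [Set.inter_def] using CliqueFreeOn.of_succ _ hG ha))

variable {k : ℕ}

lemma fan_adj_hub (p : Fin k × Fin 2) : (fan k).Adj (.inl 0) (.inr p) := by
  simp [fan, graphJoin]

lemma fan_adj_rim (i : Fin k) : (fan k).Adj (.inr (i, 0)) (.inr (i, 1)) := by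
  simp [fan, graphJoin, matching]

theorem fan_isContained_of_not_cliqueFree (h : ¬G.CliqueFree (2 * k + 1)) : fan k ⊑ G := by
  have hcard : Fintype.card (Fin 1 ⊕ Fin k × Fin 2) = 2 * k + 1 := by simp; ring
  rw [← hcard, cliqueFree_iff_top_free, not_free] at h
  exact (IsContained.of_le le_top).trans h

theorem exists_two_mul_le_degree_of_fan_isContained [Fintype V] [DecidableRel G.Adj]
    (h : fan k ⊑ G) : ∃ v, 2 * k ≤ G.degree v := by
  obtain ⟨f⟩ := h
  refine ⟨f (.inl 0), ?_⟩
  have := Fintype.card_le_of_injective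
    (fun p : Fin k × Fin 2 => (⟨f (.inr p), f.toHom.map_adj (fan_adj_hub p)⟩ :
      G.neighborSet (f (.inl 0))))
    fun p q hpq => Sum.inr_injective (f.injective (congrArg Subtype.val hpq))
  rw [Fintype.card_prod, Fintype.card_fin, Fintype.card_fin, card_neighborSet_eq_degree] at this
  omega

def IsLinkCover (G : SimpleGraph V) (v : V) (T : Finset V) : Prop :=
  ∀ x y, G.Adj v x → G.Adj v y → G.Adj x y → x ∈ T ∨ y ∈ T

theorem exists_forall_isLinkCover_le_card_of_fan_isContained (h : fan k ⊑ G) :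
    ∃ v, ∀ T, G.IsLinkCover v T → k ≤ #T := by
  obtain ⟨f⟩ := h
  refine ⟨f (.inl 0), fun T hT => ?_⟩
  have hrim (i : Fin k) : ∃ c, f (.inr (i, c)) ∈ T := by
    rcases hT _ _ (f.toHom.map_adj (fan_adj_hub _)) (f.toHom.map_adj (fan_adj_hub _))
      (f.toHom.map_adj (fan_adj_rim i)) with h | h
    exacts [⟨0, h⟩, ⟨1, h⟩]
  choose c hc using hrim
  have hinj : Set.InjOn (fun i => f (.inr (i, c i))) (univ : Finset (Fin k)) :=
    fun i _ j _ hij => congrArg Prod.fst (Sum.inr_injective (f.injective hij))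
  simpa using card_le_card_of_injOn _ (fun i _ => hc i) hinj

variable {W ι : Type*}

lemma comap_isContained (G : SimpleGraph V) (e : W ↪ V) : G.comap e ⊑ G :=
  isContained_iff_exists_le_comap.mpr ⟨e, le_rfl⟩

lemma compl_comap_isContained (G : SimpleGraph V) (e : W ↪ V) : (G.comap e)ᶜ ⊑ Gᶜ :=
  isContained_iff_exists_le_comap.mpr ⟨e, fun _ _ h => ⟨e.injective.ne h.ne, h.2⟩⟩

variable [Fintype V] (P : SimpleGraph ι) (f : V → ι)

theorem degree_compl_comap_lt_card [DecidableEq V] [DecidableRel P.Adj] (v : V) :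
    (P.comap f)ᶜ.degree v < #{w | ¬P.Adj (f v) (f w)} := by
  have hsub :
      insert v ((P.comap f)ᶜ.neighborFinset v) ⊆ ({w | ¬P.Adj (f v) (f w)} : Finset V) := by
    intro w hw
    rcases mem_insert.mp hw with rfl | hw
    · simp
    · simpa using ((mem_neighborFinset _ _ _).mp hw).2
  have := card_le_card hsub
  rwa [card_insert_of_notMem (by simp)] at this

theorem IsLinkCover.comap [DecidableEq ι] {v : V} {Q : Finset ι} (hQ : P.IsLinkCover (f v) Q) :
    (P.comap f).IsLinkCover v {w | f w ∈ Q} := by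
  intro x y hx hy hxy
  simpa using hQ _ _ hx hy hxy

end SimpleGraph

theorem Finset.card_filter_sigma_fst [Fintype ι] {s : ι → ℕ} (p : ι → Prop) [DecidablePred p] :
    #{x : Σ i, Fin (s i) | p x.1} = ∑ i with p i, s i := by
  rw [card_filter, sum_filter, Fintype.sum_sigma]
  simp [apply_ite]

namespace FanRamsey

/-- Blue edges between the parts `K_{2n}, H₁, H₂, H₃, H₄` (indices `0, …, 4`) of the extremal
colouring: from `K_{2n}` to all other parts, `H₁–H₄` and `H₂–H₃`. -/
def bluePattern : SimpleGraph (Fin 5) where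
  Adj i j := i ≠ j ∧ (i = 0 ∨ j = 0 ∨ (i : ℕ) + j = 5)
  symm := ⟨fun i j h => by omega⟩
  loopless := ⟨fun i h => h.1 rfl⟩

instance : DecidableRel bluePattern.Adj := fun i j =>
  inferInstanceAs (Decidable (i ≠ j ∧ (i = 0 ∨ j = 0 ∨ (i : ℕ) + j = 5)))

def partSize (n m : ℕ) : Fin 5 → ℕ := ![2 * n, m - 1, m - 1, m / 2, m - 1 - m / 2]

abbrev Vertex (n m : ℕ) := Σ i : Fin 5, Fin (partSize n m i)

abbrev blue (n m : ℕ) : SimpleGraph (Vertex n m) := bluePattern.comap Sigma.fst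

lemma card_vertex (n m : ℕ) (hm : 1 ≤ m) : Fintype.card (Vertex n m) = 2 * n + 3 * m - 3 := by
  rw [Fintype.card_sigma]
  simp only [Fintype.card_fin]
  simp [Fin.sum_univ_five, partSize]
  omega

lemma sum_partSize_not_bluePattern_adj_le {n m : ℕ} (h : 5 * m < 4 * n + 4) (i : Fin 5) :
    ∑ j with ¬bluePattern.Adj i j, partSize n m j ≤ 2 * n := by
  rw [sum_filter]
  fin_cases i <;> simp [Fin.sum_univ_five, partSize, bluePattern] <;> omega

theorem degree_compl_blue_lt {n m : ℕ} (h : 5 * m < 4 * n + 4) (x : Vertex n m) :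
    (blue n m)ᶜ.degree x < 2 * n := by
  have := degree_compl_comap_lt_card bluePattern Sigma.fst x
  rw [card_filter_sigma_fst (s := partSize n m) (¬bluePattern.Adj x.1 ·)] at this
  exact this.trans_le (sum_partSize_not_bluePattern_adj_le h x.1)

def linkCover : Fin 5 → Finset (Fin 5) := ![{3, 4}, {4}, {3}, {2}, {1}]

lemma isLinkCover_linkCover (i : Fin 5) : bluePattern.IsLinkCover i (linkCover i) := by
  unfold IsLinkCover
  revert i
  decide

lemma sum_partSize_linkCover_lt {n m : ℕ} (hm : 1 ≤ m) (i : Fin 5) :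
    ∑ j ∈ linkCover i, partSize n m j < m := by
  fin_cases i <;> simp [linkCover, partSize] <;> omega

theorem isLinkCover_blue (n m : ℕ) (x : Vertex n m) :
    (blue n m).IsLinkCover x {y | y.1 ∈ linkCover x.1} :=
  (isLinkCover_linkCover x.1).comap bluePattern Sigma.fst

theorem card_linkCover_lt {n m : ℕ} (hm : 1 ≤ m) (x : Vertex n m) :
    #{y : Vertex n m | y.1 ∈ linkCover x.1} < m := by
  rw [card_filter_sigma_fst (· ∈ linkCover x.1), filter_mem_eq_inter, univ_inter]
  exact sum_partSize_linkCover_lt hm x.1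

theorem not_ramseyProp {N n m : ℕ} (hm : 1 ≤ m) (h : 5 * m < 4 * n + 4)
    (hN : N ≤ 2 * n + 3 * m - 3) : ¬RamseyProp N (fan n) (fan m) := by
  intro hR
  obtain ⟨e⟩ : Nonempty (Fin N ↪ Vertex n m) :=
    Function.Embedding.nonempty_of_card_le (by rw [card_vertex n m hm]; simpa using hN)
  rcases hR ((blue n m)ᶜ.comap e) with hred | hblue
  · obtain ⟨v, hv⟩ := exists_two_mul_le_degree_of_fan_isContained
      ((contains_iff_isContained.mp hred).trans (comap_isContained _ e))
    exact (degree_compl_blue_lt h v).not_ge hv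
  · obtain ⟨v, hv⟩ := exists_forall_isLinkCover_le_card_of_fan_isContained
      ((contains_iff_isContained.mp hblue).trans (compl_comap_isContained _ e))
    rw [compl_compl] at hv
    exact (card_linkCover_lt hm v).not_ge (hv _ (isLinkCover_blue n m v))

end FanRamsey

theorem exists_ramseyProp_fan (n m : ℕ) : ∃ N, RamseyProp N (fan n) (fan m) := by
  obtain ⟨N, hN⟩ :=
    SimpleGraph.exists_forall_not_cliqueFreeOn_or_not_cliqueFreeOn_compl (2 * n + 1) (2 * m + 1)
  refine ⟨N, fun C => ?_⟩
  simp only [contains_iff_isContained]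
  refine (hN C univ (by simp)).imp ?_ ?_ <;> rw [coe_univ, SimpleGraph.cliqueFreeOn_univ] <;>
    exact SimpleGraph.fan_isContained_of_not_cliqueFree

theorem stmt_15_general (m n : ℕ) (hm : 4 ≤ m) (h1 : 5 * m < 4 * n + 4) :
    2 * n + 3 * m - 2 ≤ ramseyNumber (fan n) (fan m) := by
  obtain ⟨N, hN⟩ := exists_ramseyProp_fan n m
  refine le_csInf ⟨N, hN⟩ fun k hk => ?_
  by_contra! hk'
  exact FanRamsey.not_ramseyProp (by omega) h1 (by omega) hk

theorem stmt_15 (m n : ℕ) (hm : 4 ≤ m) (h1 : 5 * m < 4 * n + 4) (h2 : 2 * n + 4 ≤ 3 * m) :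
    2 * n + 3 * m - 2 ≤ ramseyNumber (fan n) (fan m) :=
  stmt_15_general m n hm h1
end
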